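/- arXiv:2502.03405 — 4 statements merged into one kernel-verified Lean document; each statement's English description precedes it below -/
import Mathlib

section
/- For any α_1,...,α_m ∈ [0,1] with mean ᾱ = (1/m)Σ_i α_i > 0, one has ∫_0^1 Π_{i=1}^m (1 - α_i t) dt ≤ 1/((m+1)·ᾱ). -/
/-!
For `t ∈ [0,1]` the factors `1 - αᵢ t` are nonnegative, so AM-GM bounds their product by
`(1 - ᾱ t)^m`. Integrating, `∫₀¹ (1 - ᾱ t)^m dt = (1 - (1 - ᾱ)^(m+1)) / ((m+1) ᾱ)`, and the
subtracted term is nonnegative because `ᾱ ≤ 1`.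
-/

open Finset

theorem Finset.prod_le_avg_pow {ι : Type*} (s : Finset ι) (z : ι → ℝ) (hz : ∀ i ∈ s, 0 ≤ z i) :
    ∏ i ∈ s, z i ≤ ((∑ i ∈ s, z i) / #s) ^ #s := by
  rcases s.eq_empty_or_nonempty with rfl | hs
  · simp
  have amgm := Real.geom_mean_le_arith_mean s (fun _ ↦ 1) z (fun _ _ ↦ zero_le_one)
    (by simpa using hs) hz
  simp only [Real.rpow_one, sum_const, nsmul_eq_mul, mul_one, one_mul] at amgm
  calc ∏ i ∈ s, z i = ((∏ i ∈ s, z i) ^ ((#s : ℝ)⁻¹)) ^ #s :=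
        (Real.rpow_inv_natCast_pow (prod_nonneg hz) hs.card_ne_zero).symm
    _ ≤ ((∑ i ∈ s, z i) / #s) ^ #s := by
        gcongr
        exact Real.rpow_nonneg (prod_nonneg hz) _

theorem Finset.sum_div_card_le_one {ι : Type*} (s : Finset ι) (α : ι → ℝ)
    (hα : ∀ i ∈ s, α i ≤ 1) : (∑ i ∈ s, α i) / #s ≤ 1 :=
  div_le_one_of_le₀ (by simpa using s.sum_le_card_nsmul α 1 hα) (Nat.cast_nonneg _)

theorem Finset.prod_one_sub_mul_le_pow {ι : Type*} (s : Finset ι) (α : ι → ℝ)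
    (hα : ∀ i ∈ s, α i ≤ 1) {t : ℝ} (ht : t ∈ Set.Icc (0 : ℝ) 1) :
    ∏ i ∈ s, (1 - α i * t) ≤ (1 - (∑ i ∈ s, α i) / #s * t) ^ #s := by
  rcases s.eq_empty_or_nonempty with rfl | hs
  · simp
  have hmean : (∑ i ∈ s, (1 - α i * t)) / #s = 1 - (∑ i ∈ s, α i) / #s * t := by
    have : (#s : ℝ) ≠ 0 := by simpa using hs.card_ne_zero
    rw [sum_sub_distrib, ← sum_mul, sum_const, nsmul_one]
    field_simp
  rw [← hmean]
  refine s.prod_le_avg_pow _ fun i hi ↦ ?_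
  have := hα i hi
  nlinarith [ht.1, ht.2]

theorem integral_one_sub_mul_pow {a : ℝ} (ha : a ≠ 0) (n : ℕ) :
    ∫ t in (0 : ℝ)..1, (1 - a * t) ^ n = (1 - (1 - a) ^ (n + 1)) / ((n + 1) * a) := by
  rw [intervalIntegral.integral_comp_sub_mul (fun x ↦ x ^ n) ha, integral_pow]
  simp only [mul_one, mul_zero, sub_zero, one_pow, smul_eq_mul]
  field_simp

theorem integral_one_sub_mul_pow_le {a : ℝ} (ha₀ : 0 < a) (ha₁ : a ≤ 1) (n : ℕ) :
    ∫ t in (0 : ℝ)..1, (1 - a * t) ^ n ≤ 1 / ((n + 1) * a) := by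
  rw [integral_one_sub_mul_pow ha₀.ne']
  gcongr
  have : 0 ≤ (1 - a) ^ (n + 1) := pow_nonneg (by linarith) _
  linarith

theorem integral_upper_bound_general (m : ℕ) (α : Fin m → ℝ)
    (hα : ∀ i, α i ∈ Set.Icc (0:ℝ) 1)
    (ᾱ : ℝ) (hmean : ᾱ = (1 / (m:ℝ)) * ∑ i, α i) (hpos : 0 < ᾱ) :
    (∫ t in (0:ℝ)..1, ∏ i, (1 - α i * t)) ≤ 1 / (((m:ℝ) + 1) * ᾱ) := by
  have hα₁ : ∀ i ∈ univ, α i ≤ 1 := fun i _ ↦ (hα i).2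
  have hmean' : ᾱ = (∑ i, α i) / #(univ : Finset (Fin m)) := by
    rw [hmean, card_univ, Fintype.card_fin, one_div_mul_eq_div]
  calc (∫ t in (0:ℝ)..1, ∏ i, (1 - α i * t))
      ≤ ∫ t in (0:ℝ)..1, (1 - ᾱ * t) ^ m := by
        refine intervalIntegral.integral_mono_on zero_le_one
          (Continuous.intervalIntegrable (by fun_prop) _ _)
          (Continuous.intervalIntegrable (by fun_prop) _ _)
          fun t ht ↦ ?_
        simpa [hmean'] using univ.prod_one_sub_mul_le_pow α hα₁ ht
    _ ≤ 1 / ((m + 1) * ᾱ) :=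
        integral_one_sub_mul_pow_le hpos (hmean' ▸ univ.sum_div_card_le_one α hα₁) m

/-- For α₁,…,α_m ∈ [0,1] with positive mean ᾱ,
∫_0^1 ∏ᵢ (1-αᵢt) dt ≤ 1/((m+1)·ᾱ). -/
theorem integral_upper_bound (m : ℕ) (hm : 1 ≤ m) (α : Fin m → ℝ)
    (hα : ∀ i, α i ∈ Set.Icc (0:ℝ) 1)
    (ᾱ : ℝ) (hmean : ᾱ = (1 / (m:ℝ)) * ∑ i, α i) (hpos : 0 < ᾱ) :
    (∫ t in (0:ℝ)..1, ∏ i, (1 - α i * t)) ≤ 1 / (((m:ℝ) + 1) * ᾱ) :=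
  integral_upper_bound_general m α hα ᾱ hmean hpos
end

section
/- Let p_1,...,p_n ∈ [0,1], let γ ∈ (0,1], and let S be a random subset of {1,...,n} such that P(i ∈ S) = γ for every i (with the events {i ∈ S} measurable). Then for every t ∈ [0,1) with p_i t < 1 for all i, Π_{i=1}^n (1 - p_i t) ≤ E_S[ Π_{s ∈ S} (1 - p_s t)^{1/γ} ]. -/
open Finset

/-- If S is a random subset of {1,…,n} with P(i ∈ S) = γ for every
i (modeled by a probability weight q on finsets), then for t ∈ [0,1) with
pᵢt < 1 for all i, ∏ᵢ (1-pᵢt) ≤ E_S[∏_{s∈S} (1-p_s t)^{1/γ}]. -/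
theorem random_subset_jensen (n : ℕ) (p : Fin n → ℝ)
    (hp : ∀ i, p i ∈ Set.Icc (0:ℝ) 1)
    (γ : ℝ) (hγ : γ ∈ Set.Ioc (0:ℝ) 1)
    (q : Finset (Fin n) → ℝ) (hq_nonneg : ∀ S, 0 ≤ q S) (hq_sum : ∑ S, q S = 1)
    (hq_marginal : ∀ i : Fin n,
      ∑ S ∈ Finset.univ.filter (fun S : Finset (Fin n) => i ∈ S), q S = γ)
    (t : ℝ) (ht : t ∈ Set.Ico (0:ℝ) 1) (hpt : ∀ i, p i * t < 1) :
    (∏ i, (1 - p i * t))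
      ≤ ∑ S : Finset (Fin n), q S * ∏ s ∈ S, (1 - p s * t) ^ (1/γ : ℝ) := by
  obtain ⟨hγ0, hγ1⟩ := hγ
  have hpos : ∀ i, (0:ℝ) < 1 - p i * t := fun i => by linarith [hpt i]
  set g : Fin n → ℝ := fun i => Real.log (1 - p i * t) with hg
  -- vector of conditional sums
  set x : Finset (Fin n) → ℝ := fun S => (1/γ) * ∑ i ∈ S, g i with hx
  have key : ∑ i, g i = ∑ S : Finset (Fin n), q S • x S := by
    have h1 : ∀ S : Finset (Fin n), q S * ∑ i ∈ S, g i
        = ∑ i : Fin n, (if i ∈ S then q S * g i else 0) := by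
      intro S
      rw [Finset.mul_sum, ← Finset.sum_filter]
      congr 1
      ext i
      simp [Finset.mem_filter]
    have h2 : ∑ S : Finset (Fin n), q S * ∑ i ∈ S, g i = γ * ∑ i, g i := by
      simp only [h1]
      calc ∑ S : Finset (Fin n), ∑ i : Fin n, (if i ∈ S then q S * g i else 0)
          = ∑ i : Fin n, ∑ S : Finset (Fin n), (if i ∈ S then q S * g i else 0) :=
            Finset.sum_comm
        _ = ∑ i : Fin n, (∑ S ∈ Finset.univ.filter
              (fun S : Finset (Fin n) => i ∈ S), q S) * g i := by
            refine Finset.sum_congr rfl fun i _ => ?_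
            rw [Finset.sum_mul, ← Finset.sum_filter]
        _ = ∑ i : Fin n, γ * g i := by
            refine Finset.sum_congr rfl fun i _ => ?_
            rw [hq_marginal i]
        _ = γ * ∑ i, g i := by rw [Finset.mul_sum]
    simp only [smul_eq_mul, hx]
    calc ∑ i, g i = (1/γ) * (γ * ∑ i, g i) := by field_simp
      _ = (1/γ) * ∑ S : Finset (Fin n), q S * ∑ i ∈ S, g i := by rw [h2]
      _ = ∑ S : Finset (Fin n), q S * ((1/γ) * ∑ i ∈ S, g i) := by
          rw [Finset.mul_sum]; exact Finset.sum_congr rfl fun S _ => by ring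
  have jensen := convexOn_exp.map_sum_le (t := Finset.univ)
    (w := q) (p := x) (fun S _ => hq_nonneg S) hq_sum (fun S _ => Set.mem_univ _)
  have lhs_eq : (∏ i, (1 - p i * t)) = Real.exp (∑ i, g i) := by
    rw [Real.exp_sum]
    exact Finset.prod_congr rfl fun i _ => (Real.exp_log (hpos i)).symm
  have rhs_eq : ∀ S : Finset (Fin n),
      Real.exp (x S) = ∏ s ∈ S, (1 - p s * t) ^ (1/γ : ℝ) := by
    intro S
    rw [hx]
    simp only
    rw [Finset.mul_sum, Real.exp_sum]
    refine Finset.prod_congr rfl fun s _ => ?_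
    rw [Real.rpow_def_of_pos (hpos s), mul_comm]
  calc (∏ i, (1 - p i * t)) = Real.exp (∑ i, g i) := lhs_eq
    _ = Real.exp (∑ S : Finset (Fin n), q S • x S) := by rw [key]
    _ ≤ ∑ S : Finset (Fin n), q S • Real.exp (x S) := jensen
    _ = ∑ S : Finset (Fin n), q S * ∏ s ∈ S, (1 - p s * t) ^ (1/γ : ℝ) := by
        refine Finset.sum_congr rfl fun S _ => ?_
        rw [smul_eq_mul, rhs_eq S]
end

section
/- Let W ∈ ℝ^{n×n} be symmetric with nonnegative entries and zero diagonal, and let p_1,...,p_n ∈ [0,1] be independent Bernoulli parameters for cluster membership. Then the expected contribution of this cluster to the ratio-cut satisfies RC(p) := (1/2) Σ_{i,j} W_{ij}(p_i + p_j - 2 p_i p_j) ∫_0^1 Π_{m ≠ i,j} (1 - p_m t) dt ≤ (e^2/(2n)) · (1/p̄) · Σ_{i,j} W_{ij}(p_i + p_j - 2 p_i p_j), provided p̄ = (1/n)Σ_i p_i > 0. -/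
/-!
Since `1 - x ≤ exp (-x)`, the integrand for the pair `(i, j)` is at most
`exp (-t ∑_{m ≠ i,j} p m) ≤ exp (2t) · exp (-t n p̄) ≤ e² · exp (-t n p̄)`, because the two
omitted parameters are at most `1`. Integrating over `[0, 1]` gives at most `e² / (n p̄)`, and
the weights `W i j (p i + p j - 2 p i p j) = W i j (p i (1 - p j) + p j (1 - p i))` are
nonnegative, so the bound can be applied termwise.
-/

open Finset

theorem prod_one_sub_le_exp_neg_sum {ι : Type*} (s : Finset ι) (a : ι → ℝ)
    (ha : ∀ m ∈ s, a m ≤ 1) : ∏ m ∈ s, (1 - a m) ≤ Real.exp (-∑ m ∈ s, a m) := by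
  rw [← sum_neg_distrib, Real.exp_sum]
  refine prod_le_prod (fun m hm => sub_nonneg.mpr (ha m hm)) fun m _ => ?_
  linarith [Real.add_one_le_exp (-a m)]

theorem integral_exp_neg_mul_le_inv {S : ℝ} (hS : 0 < S) :
    ∫ t in (0:ℝ)..1, Real.exp (-S * t) ≤ S⁻¹ := by
  rw [intervalIntegral.integral_comp_mul_left Real.exp (neg_ne_zero.mpr hS.ne'), integral_exp,
    mul_zero, mul_one, Real.exp_zero, smul_eq_mul, inv_neg, neg_mul, ← mul_neg, neg_sub]
  exact mul_le_of_le_one_right (inv_nonneg.mpr hS.le) (by linarith [Real.exp_pos (-S)])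

theorem integral_prod_one_sub_mul_le {ι : Type*} [Fintype ι] [DecidableEq ι] (p : ι → ℝ)
    (hp : ∀ i, p i ∈ Set.Icc (0:ℝ) 1) (hS : 0 < ∑ i, p i) (s : Finset ι) (k : ℕ)
    (hk : #sᶜ ≤ k) :
    ∫ t in (0:ℝ)..1, ∏ m ∈ s, (1 - p m * t) ≤ Real.exp k / ∑ i, p i := by
  set S := ∑ i, p i
  have hsum : S - k ≤ ∑ m ∈ s, p m := by
    have hcompl : ∑ m ∈ sᶜ, p m ≤ k :=
      (sum_le_card_nsmul _ _ 1 fun m _ => (hp m).2).trans (by simpa using hk)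
    linarith [sum_add_sum_compl s p]
  have hpointwise : ∀ t ∈ Set.Icc (0:ℝ) 1,
      ∏ m ∈ s, (1 - p m * t) ≤ Real.exp k * Real.exp (-S * t) := by
    rintro t ⟨ht0, ht1⟩
    calc ∏ m ∈ s, (1 - p m * t) ≤ Real.exp (-∑ m ∈ s, p m * t) :=
          prod_one_sub_le_exp_neg_sum s _ fun m _ =>
            mul_le_one₀ (hp m).2 ht0 ht1
      _ ≤ Real.exp (k * t + -S * t) := by
          rw [← sum_mul]; gcongr; nlinarith
      _ ≤ Real.exp k * Real.exp (-S * t) := by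
          rw [Real.exp_add]; gcongr; nlinarith [Nat.cast_nonneg (α := ℝ) k]
  calc ∫ t in (0:ℝ)..1, ∏ m ∈ s, (1 - p m * t)
      ≤ ∫ t in (0:ℝ)..1, Real.exp k * Real.exp (-S * t) :=
        intervalIntegral.integral_mono_on zero_le_one
          (by apply Continuous.intervalIntegrable; fun_prop)
          (by apply Continuous.intervalIntegrable; fun_prop) hpointwise
    _ ≤ Real.exp k * S⁻¹ := by
        rw [intervalIntegral.integral_const_mul]
        exact mul_le_mul_of_nonneg_left (integral_exp_neg_mul_le_inv hS) (Real.exp_pos _).le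
    _ = Real.exp k / S := rfl

theorem rc_upper_bound_general (n : ℕ) (W : Matrix (Fin n) (Fin n) ℝ)
    (hW_nonneg : ∀ i j, 0 ≤ W i j)
    (p : Fin n → ℝ) (hp : ∀ i, p i ∈ Set.Icc (0:ℝ) 1)
    (pbar : ℝ) (hmean : pbar = (1 / (n:ℝ)) * ∑ i, p i) (hpos : 0 < pbar) :
    (1/2 : ℝ) * ∑ i, ∑ j, W i j * (p i + p j - 2 * p i * p j) *
        ∫ t in (0:ℝ)..1, ∏ m ∈ (Finset.univ \ {i, j}), (1 - p m * t)
      ≤ (Real.exp 2 / (2 * (n:ℝ))) * (1 / pbar) *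
          ∑ i, ∑ j, W i j * (p i + p j - 2 * p i * p j) := by
  have hn : 0 < (n : ℝ) := by
    refine (Nat.cast_nonneg n).lt_of_ne fun hn => ?_
    simp [← hn] at hmean
    linarith
  have hsum : ∑ i, p i = n * pbar := by
    rw [hmean, ← mul_assoc, mul_one_div_cancel hn.ne', one_mul]
  have hweight : ∀ i j, 0 ≤ W i j * (p i + p j - 2 * p i * p j) := fun i j => by
    obtain ⟨hi0, hi1⟩ := hp i
    obtain ⟨hj0, hj1⟩ := hp j
    exact mul_nonneg (hW_nonneg i j) (by nlinarith)
  have hintegral : ∀ i j : Fin n,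
      ∫ t in (0:ℝ)..1, ∏ m ∈ univ \ {i, j}, (1 - p m * t) ≤ Real.exp 2 / (n * pbar) := by
    intro i j
    rw [← hsum, ← compl_eq_univ_sdiff]
    exact integral_prod_one_sub_mul_le p hp (hsum ▸ mul_pos hn hpos) _ 2
      (by simpa using card_le_two)
  calc (1/2 : ℝ) * ∑ i, ∑ j, W i j * (p i + p j - 2 * p i * p j) *
        ∫ t in (0:ℝ)..1, ∏ m ∈ (Finset.univ \ {i, j}), (1 - p m * t)
      ≤ (1/2 : ℝ) * ∑ i, ∑ j,
          W i j * (p i + p j - 2 * p i * p j) * (Real.exp 2 / (n * pbar)) := by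
        gcongr with i _ j _
        exacts [hweight i j, hintegral i j]
    _ = (Real.exp 2 / (2 * (n:ℝ))) * (1 / pbar) *
          ∑ i, ∑ j, W i j * (p i + p j - 2 * p i * p j) := by
        simp only [← sum_mul]
        field_simp

/-- Upper bound on the expected ratio-cut contribution of one
cluster: RC(p) = (1/2)Σ_{i,j} W_{ij}(pᵢ+pⱼ-2pᵢpⱼ)∫_0^1 ∏_{m≠i,j}(1-p_m t)dt
≤ (e²/(2n))·(1/p̄)·Σ_{i,j} W_{ij}(pᵢ+pⱼ-2pᵢpⱼ). -/
theorem rc_upper_bound (n : ℕ) (W : Matrix (Fin n) (Fin n) ℝ)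
    (hW_symm : W.IsSymm) (hW_nonneg : ∀ i j, 0 ≤ W i j)
    (hW_diag : ∀ i, W i i = 0)
    (p : Fin n → ℝ) (hp : ∀ i, p i ∈ Set.Icc (0:ℝ) 1)
    (pbar : ℝ) (hmean : pbar = (1 / (n:ℝ)) * ∑ i, p i) (hpos : 0 < pbar) :
    (1/2 : ℝ) * ∑ i, ∑ j, W i j * (p i + p j - 2 * p i * p j) *
        ∫ t in (0:ℝ)..1, ∏ m ∈ (Finset.univ \ {i, j}), (1 - p m * t)
      ≤ (Real.exp 2 / (2 * (n:ℝ))) * (1 / pbar) *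
          ∑ i, ∑ j, W i j * (p i + p j - 2 * p i * p j) :=
  rc_upper_bound_general n W hW_nonneg p hp pbar hmean hpos
end

section
/- Let Z be a Poisson binomial random variable with parameters α_1,...,α_m ∈ [0,1] and let Z' be a binomial random variable with parameters m and ᾱ = (1/m)Σ_i α_i. Then E[1/(1+Z)] ≤ E[1/(1+Z')]. -/
open Finset

/-! Since `1 / (1 + k) = ∫₀¹ tᵏ dt`, both expectations are integrals over `[0, 1]` of probability
generating functions: `E[1/(1+Z)] = ∫₀¹ ∏ᵢ (αᵢ t + 1 - αᵢ) dt` and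
`E[1/(1+Z')] = ∫₀¹ (ᾱ t + 1 - ᾱ)ᵐ dt`. For `t ∈ [0, 1]` the factors `αᵢ t + 1 - αᵢ` are
nonnegative with mean `ᾱ t + 1 - ᾱ`, so AM-GM compares the integrands pointwise. -/

theorem prod_le_pow_card_of_sum_eq_card_mul {ι : Type*} (s : Finset ι) {z : ι → ℝ} {c : ℝ}
    (hz : ∀ i ∈ s, 0 ≤ z i) (hc : ∑ i ∈ s, z i = #s * c) : ∏ i ∈ s, z i ≤ c ^ #s := by
  rcases s.eq_empty_or_nonempty with rfl | hs
  · simp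
  have hcard : (0 : ℝ) < #s := by exact_mod_cast hs.card_pos
  have hamgm := Real.geom_mean_le_arith_mean_weighted s (fun _ ↦ 1 / (#s : ℝ)) z
    (fun _ _ ↦ by positivity) (by simp [sum_const, hcard.ne']) hz
  have hroot : ∀ i ∈ s, (z i ^ (1 / (#s : ℝ))) ^ #s = z i := fun i hi ↦ by
    rw [← Real.rpow_natCast, ← Real.rpow_mul (hz i hi), one_div_mul_cancel hcard.ne',
      Real.rpow_one]
  calc ∏ i ∈ s, z i = (∏ i ∈ s, z i ^ (1 / (#s : ℝ))) ^ #s := by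
        rw [← prod_pow]; exact (prod_congr rfl hroot).symm
    _ ≤ (∑ i ∈ s, 1 / (#s : ℝ) * z i) ^ #s :=
        pow_le_pow_left₀ (prod_nonneg fun i hi ↦ Real.rpow_nonneg (hz i hi) _) hamgm _
    _ = c ^ #s := by rw [← mul_sum, hc, one_div, inv_mul_cancel_left₀ hcard.ne']

theorem integral_pow_zero_one (n : ℕ) : ∫ t in (0 : ℝ)..1, t ^ n = 1 / (1 + n) := by
  simp [integral_pow, add_comm]

theorem sum_prod_ite_mul_pow_card_filter {ι R : Type*} [Fintype ι] [DecidableEq ι]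
    [CommSemiring R] (a b : ι → R) (t : R) :
    ∑ ω : ι → Bool, (∏ i, if ω i then a i else b i) * t ^ #{i | ω i} = ∏ i, (a i * t + b i) := by
  have hfactor : ∀ ω : ι → Bool, (∏ i, if ω i then a i else b i) * t ^ #{i | ω i}
      = ∏ i, if ω i then a i * t else b i := fun ω ↦ by
    rw [card_filter, ← prod_pow_eq_pow_sum, ← prod_mul_distrib]
    exact prod_congr rfl fun i _ ↦ by cases ω i <;> simp
  simp_rw [hfactor]
  rw [← Fintype.prod_sum (fun i (β : Bool) ↦ if β then a i * t else b i)]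
  simp

theorem integral_const_mul_pow_zero_one (c : ℝ) (n : ℕ) :
    ∫ t in (0 : ℝ)..1, c * t ^ n = c * (1 / (1 + n)) := by
  rw [intervalIntegral.integral_const_mul, integral_pow_zero_one]

theorem sum_prod_ite_mul_one_div_one_add_card_eq_integral {ι : Type*} [Fintype ι]
    [DecidableEq ι] (a b : ι → ℝ) :
    ∑ ω : ι → Bool, (∏ i, if ω i then a i else b i) * (1 / (1 + (#{i | ω i} : ℝ)))
      = ∫ t in (0 : ℝ)..1, ∏ i, (a i * t + b i) := by
  simp_rw [← sum_prod_ite_mul_pow_card_filter, ← integral_const_mul_pow_zero_one]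
  exact (intervalIntegral.integral_finsetSum fun _ _ ↦
    (by fun_prop : Continuous _).intervalIntegrable _ _).symm

theorem sum_choose_mul_one_div_one_add_eq_integral (p q : ℝ) (m : ℕ) :
    ∑ i ∈ range (m + 1), (m.choose i : ℝ) * p ^ i * q ^ (m - i) * (1 / (1 + (i : ℝ)))
      = ∫ t in (0 : ℝ)..1, (p * t + q) ^ m := by
  have hexpand : ∀ t : ℝ, (p * t + q) ^ m
      = ∑ i ∈ range (m + 1), (m.choose i : ℝ) * p ^ i * q ^ (m - i) * t ^ i := fun t ↦ by
    rw [add_pow]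
    exact sum_congr rfl fun i _ ↦ by ring
  simp_rw [hexpand, ← integral_const_mul_pow_zero_one]
  exact (intervalIntegral.integral_finsetSum fun _ _ ↦
    (by fun_prop : Continuous _).intervalIntegrable _ _).symm

theorem poisson_binomial_vs_binomial_general (m : ℕ) (α : Fin m → ℝ)
    (hα : ∀ i, α i ∈ Set.Icc (0:ℝ) 1)
    (w : (Fin m → Bool) → ℝ)
    (hw : w = fun ω => ∏ i, (if ω i then α i else 1 - α i))
    (Z : (Fin m → Bool) → ℝ)
    (hZ : Z = fun ω => ∑ i, (if ω i then (1:ℝ) else 0))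
    (abar : ℝ) (hmean : abar = (1 / (m:ℝ)) * ∑ i, α i) :
    ∑ ω, w ω * (1 / (1 + Z ω))
      ≤ ∑ i ∈ Finset.range (m + 1),
          (m.choose i : ℝ) * abar ^ i * (1 - abar) ^ (m - i) * (1 / (1 + (i:ℝ))) := by
  have hZ_card : ∀ ω, Z ω = #{i | ω i} := fun ω ↦ by simp [hZ, sum_boole]
  have hsum : ∑ i, α i = m * abar := by
    rcases eq_or_ne m 0 with rfl | hm
    · simp
    · rw [hmean]; field_simp
  simp_rw [hw, hZ_card, sum_prod_ite_mul_one_div_one_add_card_eq_integral,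
    sum_choose_mul_one_div_one_add_eq_integral]
  refine intervalIntegral.integral_mono_on zero_le_one
    ((by fun_prop : Continuous _).intervalIntegrable _ _)
    ((by fun_prop : Continuous _).intervalIntegrable _ _) fun t ht ↦ ?_
  have hmean_affine :
      ∑ i, (α i * t + (1 - α i)) = #(univ : Finset (Fin m)) * (abar * t + (1 - abar)) := by
    simp only [sum_add_distrib, sum_sub_distrib, ← sum_mul, hsum, sum_const, card_univ,
      Fintype.card_fin, nsmul_eq_mul, mul_one]
    ring
  simpa using prod_le_pow_card_of_sum_eq_card_mul univ
    (fun i _ ↦ add_nonneg (mul_nonneg (hα i).1 ht.1) (sub_nonneg.2 (hα i).2)) hmean_affine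

/-- The Poisson binomial Z with parameters α₁,…,α_m satisfies
E[1/(1+Z)] ≤ E[1/(1+Z')] where Z' is binomial with parameters m and
ᾱ = (1/m)Σᵢαᵢ. The binomial expectation is written out via its pmf. -/
theorem poisson_binomial_vs_binomial (m : ℕ) (hm : 1 ≤ m) (α : Fin m → ℝ)
    (hα : ∀ i, α i ∈ Set.Icc (0:ℝ) 1)
    (w : (Fin m → Bool) → ℝ)
    (hw : w = fun ω => ∏ i, (if ω i then α i else 1 - α i))
    (Z : (Fin m → Bool) → ℝ)
    (hZ : Z = fun ω => ∑ i, (if ω i then (1:ℝ) else 0))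
    (abar : ℝ) (hmean : abar = (1 / (m:ℝ)) * ∑ i, α i) :
    ∑ ω, w ω * (1 / (1 + Z ω))
      ≤ ∑ i ∈ Finset.range (m + 1),
          (m.choose i : ℝ) * abar ^ i * (1 - abar) ^ (m - i) * (1 / (1 + (i:ℝ))) :=
  poisson_binomial_vs_binomial_general m α hα w hw Z hZ abar hmean
end
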